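/- arXiv:2202.09937 — 2 statements merged into one kernel-verified Lean document; each statement's English description precedes it below -/
import Mathlib

section
/- Let G be a group, H a subgroup of index 2, ν ∈ G \ H, and ψ : H → F× a homomorphism into the multiplicative group of a field F, with ψ^ν(h) := ψ(ν h ν⁻¹). Let ρ : G → GL₂(F) be the representation defined by ρ(h) = diag(ψ(h), ψ^ν(h)) for h ∈ H and ρ(ν) = the matrix with entries (0,1;a,0) where a = ψ(ν²). If ψ ≠ ψ^ν, then ρ is irreducible, i.e., no one-dimensional subspace of F² is stable under all ρ(g), g ∈ G. -/
open Matrix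

/-- If `ψ ≠ ψ^ν`, the induced representation
`ρ = Ind_H^G ψ` (realized by `ρ(h) = diag(ψ h, ψ^ν h)` for `h ∈ H` and
`ρ(ν) = (0,1; ψ(ν²),0)`) is irreducible: no one-dimensional subspace of `F²`
is stable under all `ρ(g)`. -/
theorem stmt4 (G : Type*) [Group G] (F : Type*) [Field F]
    (H : Subgroup G) (hind : H.index = 2) (ν : G) (hν : ν ∉ H)
    (hconj : ∀ h ∈ H, ν * h * ν⁻¹ ∈ H) (hν2 : ν ^ 2 ∈ H)
    (ψ : H →* Fˣ)
    (ρ : G →* Matrix.GeneralLinearGroup (Fin 2) F)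
    (hρH : ∀ h (hh : h ∈ H), (ρ h : Matrix (Fin 2) (Fin 2) F)
      = Matrix.diagonal ![(ψ ⟨h, hh⟩ : F), (ψ ⟨ν * h * ν⁻¹, hconj h hh⟩ : F)])
    (hρν : (ρ ν : Matrix (Fin 2) (Fin 2) F) = !![0, 1; (ψ ⟨ν ^ 2, hν2⟩ : F), 0])
    (hne : ¬ ∀ h (hh : h ∈ H), ψ ⟨h, hh⟩ = ψ ⟨ν * h * ν⁻¹, hconj h hh⟩) :
    ¬ ∃ v : Fin 2 → F, v ≠ 0 ∧ ∀ g : G, ∃ c : F,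
      Matrix.mulVec (ρ g : Matrix (Fin 2) (Fin 2) F) v = c • v := by
  rintro ⟨v, hv, hstab⟩
  push_neg at hne
  obtain ⟨h, hh, hpsi⟩ := hne
  obtain ⟨c, hc⟩ := hstab h
  rw [hρH h hh] at hc
  have hc0 := congrFun hc 0
  have hc1 := congrFun hc 1
  simp only [Matrix.mulVec_diagonal, Pi.smul_apply, smul_eq_mul,
    Matrix.cons_val_zero, Matrix.cons_val_one, Matrix.head_cons] at hc0 hc1
  obtain ⟨d, hd⟩ := hstab ν
  rw [hρν] at hd
  have hd0 := congrFun hd 0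
  have hd1 := congrFun hd 1
  simp only [Matrix.mulVec, dotProduct, Fin.sum_univ_two, Pi.smul_apply,
    smul_eq_mul, Matrix.cons_val', Matrix.cons_val_zero, Matrix.cons_val_one,
    Matrix.head_cons, Matrix.empty_val', Matrix.cons_val_fin_one, Matrix.head_fin_const,
    Matrix.of_apply, zero_mul, one_mul, mul_zero, zero_add, add_zero] at hd0 hd1
  have hane : (ψ ⟨h, hh⟩ : F) ≠ (ψ ⟨ν * h * ν⁻¹, hconj h hh⟩ : F) :=
    fun e => hpsi (Units.ext e)
  have haunit : (ψ ⟨ν ^ 2, hν2⟩ : F) ≠ 0 := Units.ne_zero _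
  by_cases h0 : v 0 = 0
  · have h1 : v 1 ≠ 0 := by
      intro h1
      apply hv
      funext i
      fin_cases i <;> simp [h0, h1]
    rw [h0, mul_zero] at hd0
    exact h1 hd0
  · have hc' : c = (ψ ⟨h, hh⟩ : F) := mul_right_cancel₀ h0 (hc0.symm)
    have h1 : v 1 = 0 := by
      by_contra h1
      exact hane (mul_right_cancel₀ h1 (hc1.trans (by rw [hc']))).symm
    rw [h1, mul_zero] at hd1
    exact (mul_ne_zero haunit h0) hd1
end

section
/- Let F be a field, G a group, and ρ : G → GL₂(F) a representation induced from a character ψ of an index-2 subgroup H (realized by ρ(h) = diag(ψ(h), ψ^ν(h)) for h ∈ H and ρ(ν) = (0,1;ψ(ν²),0) with ν ∈ G \ H). Suppose char F ≠ 2 and ψ^ν = ψ⁻¹ with ψ^ν ≠ ψ. Then the one-dimensional representation δ : G → Fˣ given by δ(h)=1 for h ∈ H and δ(g) = −1 for g ∉ H is a subrepresentation of the adjoint representation Ad ρ (the conjugation action of G on M₂(F)). -/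
open Matrix

lemma conj_eq_of_mul_eq {n : Type*} [Fintype n] [DecidableEq n] {F : Type*} [Field F]
    (u : Matrix.GeneralLinearGroup n F) (v w : Matrix n n F)
    (h : (u : Matrix n n F) * v = w * u) :
    (u : Matrix n n F) * v * ((u : Matrix n n F))⁻¹ = w := by
  have h2 : ((u : Matrix n n F) * ((u : Matrix n n F))⁻¹) = 1 := by
    rw [← Matrix.coe_units_inv, ← Units.val_mul, mul_inv_cancel, Units.val_one]
  rw [h, mul_assoc, h2, mul_one]

/-- If `char F ≠ 2`, `ψ^ν = ψ⁻¹` and `ψ^ν ≠ ψ`, then the quadratic character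
`δ` of `G` cut out by `H` (`δ = 1` on `H`, `δ = -1` off `H`) is a subrepresentation of the
adjoint representation `Ad ρ` on `M₂(F)`. -/
theorem stmt13 (G : Type*) [Group G] (F : Type*) [Field F] (hchar : (2 : F) ≠ 0)
    (H : Subgroup G) (hind : H.index = 2) (ν : G) (hν : ν ∉ H)
    (hconj : ∀ h ∈ H, ν * h * ν⁻¹ ∈ H) (hν2 : ν ^ 2 ∈ H)
    (ψ : H →* Fˣ)
    (ρ : G →* Matrix.GeneralLinearGroup (Fin 2) F)
    (hρH : ∀ h (hh : h ∈ H), (ρ h : Matrix (Fin 2) (Fin 2) F)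
      = Matrix.diagonal ![(ψ ⟨h, hh⟩ : F), (ψ ⟨ν * h * ν⁻¹, hconj h hh⟩ : F)])
    (hρν : (ρ ν : Matrix (Fin 2) (Fin 2) F) = !![0, 1; (ψ ⟨ν ^ 2, hν2⟩ : F), 0])
    (hinv : ∀ h (hh : h ∈ H), ψ ⟨ν * h * ν⁻¹, hconj h hh⟩ = (ψ ⟨h, hh⟩)⁻¹)
    (hne : ¬ ∀ h (hh : h ∈ H), ψ ⟨ν * h * ν⁻¹, hconj h hh⟩ = ψ ⟨h, hh⟩) :
    ∃ v : Matrix (Fin 2) (Fin 2) F, v ≠ 0 ∧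
      (∀ h ∈ H, (ρ h : Matrix (Fin 2) (Fin 2) F) * v * ((ρ h)⁻¹ : Matrix (Fin 2) (Fin 2) F) = v) ∧
      (∀ g ∉ H, (ρ g : Matrix (Fin 2) (Fin 2) F) * v * ((ρ g)⁻¹ : Matrix (Fin 2) (Fin 2) F) = -v) := by
  refine ⟨!![1, 0; 0, -1], ?_, ?_, ?_⟩
  · intro h0
    have : (1 : F) = 0 := by
      have := congrFun (congrFun h0 0) 0
      simp at this
    simp at this
  · intro h hh
    apply conj_eq_of_mul_eq
    rw [hρH h hh]
    ext i j
    fin_cases i <;> fin_cases j <;>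
      simp [Matrix.mul_apply, Fin.sum_univ_two, Matrix.diagonal_apply]
  · intro g hg
    have hh : ν⁻¹ * g ∈ H := by
      rw [Subgroup.mul_mem_iff_of_index_two hind]
      simp [hg, hν]
    apply conj_eq_of_mul_eq
    have hgν : g = ν * (ν⁻¹ * g) := by group
    have : (ρ g : Matrix (Fin 2) (Fin 2) F)
        = (ρ ν : Matrix (Fin 2) (Fin 2) F) * (ρ (ν⁻¹ * g) : Matrix (Fin 2) (Fin 2) F) := by
      rw [hgν]
      rw [_root_.map_mul, Units.val_mul]
      congr 1 <;> rw [← hgν]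
    rw [this, hρν, hρH _ hh]
    ext i j
    fin_cases i <;> fin_cases j <;>
      simp [Matrix.mul_apply, Fin.sum_univ_two, Matrix.vecMul, dotProduct, Matrix.diagonal_apply] <;> ring
end
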